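/- arXiv:2308.01101 — 2 statements merged into one kernel-verified Lean document; each statement's English description precedes it below -/
import Mathlib

section
/- Let U ⊆ O be open, let f : ℂ × ℂ → ℂ be holomorphic on U, let n ∈ ℕ, and let (z,w) ∈ U. Then the pure Peschl–Minda derivative is globally linearised by the coordinate change Ψ₊(z,w) = (z/(1−z·w), w): D^{n,0} f(z,w) = (1 − z·w)^{−n} · iteratedDeriv n (fun u => f (u/(1 + u·w), w)) (z/(1 − z·w)). (Note that u/(1+u·w) = z when u = z/(1−z·w), so the iterated derivative only uses values of f near (z,w).) -/
/-!
The Möbius map `u ↦ (z + u) / (1 + w u)` in the first slot of `D^{n,0}` is the first coordinate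
of `Ψ₊⁻¹(·, w)` precomposed with the affine map `u ↦ (u + z) / (1 - z w)`, which sends `0` to the
first coordinate of `Ψ₊(z, w)`. Iterated derivatives commute with affine changes of variable up to
the `n`-th power of the slope, which gives the factor `(1 - z w)^{-n}`.
-/

/-- The domain `O = {(z,w) ∈ ℂ² : z·w ≠ 1}`. -/
def Oset : Set (ℂ × ℂ) := {p | p.1 * p.2 ≠ 1}

/-- The Peschl–Minda derivative of order `(m,n)` of `f` at `(z,w)`. -/
noncomputable def PM (m n : ℕ) (f : ℂ × ℂ → ℂ) (z w : ℂ) : ℂ :=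
  iteratedDeriv n (fun v => iteratedDeriv m
    (fun u => f ((z + u) / (1 + w * u), (w + v) / (1 + z * v))) 0) 0

theorem iteratedDeriv_comp_mul_left {𝕜 F : Type*} [NontriviallyNormedField 𝕜]
    [NormedAddCommGroup F] [NormedSpace 𝕜 F] (n : ℕ) (f : 𝕜 → F) (c : 𝕜) :
    iteratedDeriv n (fun x => f (c * x)) = fun x => c ^ n • iteratedDeriv n f (c * x) := by
  induction n with
  | zero => simp
  | succ n ih =>
    funext x
    rw [iteratedDeriv_succ, ih, deriv_fun_const_smul_field,
      deriv_comp_mul_left c (iteratedDeriv n f), iteratedDeriv_succ, smul_smul, pow_succ]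

theorem PM_zero_right (m : ℕ) (f : ℂ × ℂ → ℂ) (z w : ℂ) :
    PM m 0 f z w = iteratedDeriv m (fun u => f ((z + u) / (1 + w * u), w)) 0 := by
  simp [PM]

/-- This holds for every `u`: when `1 + w u = 0` both sides are junk divisions by zero. -/
theorem mobius_eq_div_one_add_mul_comp_affine {K : Type*} [Field K] {z w : K}
    (h : 1 - z * w ≠ 0) (u : K) :
    (z + u) / (1 + w * u)
      = (1 - z * w)⁻¹ * (u + z) / (1 + (1 - z * w)⁻¹ * (u + z) * w) := by
  have hden : 1 + (1 - z * w)⁻¹ * (u + z) * w = (1 - z * w)⁻¹ * (1 + w * u) := by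
    field_simp
    ring
  rw [hden, mul_div_mul_left _ _ (inv_ne_zero h), add_comm u z]

theorem stmt13_general (U : Set (ℂ × ℂ)) (hUO : U ⊆ Oset)
    (f : ℂ × ℂ → ℂ) (n : ℕ)
    (z w : ℂ) (hzw : (z, w) ∈ U) :
    PM n 0 f z w
      = (1 - z * w) ^ (-(n : ℤ))
          * iteratedDeriv n (fun u => f (u / (1 + u * w), w)) (z / (1 - z * w)) := by
  have hd : 1 - z * w ≠ 0 := sub_ne_zero.mpr (Ne.symm (hUO hzw))
  set g : ℂ → ℂ := fun u => f (u / (1 + u * w), w)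
  have hchart :
      (fun u => f ((z + u) / (1 + w * u), w)) = fun u => g ((1 - z * w)⁻¹ * (u + z)) := by
    funext u
    rw [mobius_eq_div_one_add_mul_comp_affine hd]
  rw [PM_zero_right, hchart, iteratedDeriv_comp_add_const n (fun y => g ((1 - z * w)⁻¹ * y)) z,
    iteratedDeriv_comp_mul_left]
  dsimp only
  rw [zero_add, smul_eq_mul, zpow_neg, zpow_natCast, inv_pow, ← div_eq_inv_mul z]

/-- global linearisation of the pure Peschl–Minda derivative via the
coordinate change `Ψ₊(z,w) = (z/(1−zw), w)`. -/
theorem stmt13 (U : Set (ℂ × ℂ)) (hU : IsOpen U) (hUO : U ⊆ Oset)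
    (f : ℂ × ℂ → ℂ) (hf : DifferentiableOn ℂ f U) (n : ℕ)
    (z w : ℂ) (hzw : (z, w) ∈ U) :
    PM n 0 f z w
      = (1 - z * w) ^ (-(n : ℤ))
          * iteratedDeriv n (fun u => f (u / (1 + u * w), w)) (z / (1 - z * w)) :=
  stmt13_general U hUO f n z w hzw
end

section
/- Let (f₊, f₋) and (g₊, g₋) be holomorphic pairs on Ω and let (z,w) ∈ O. Then the function ℏ ↦ (f ⋆_ℏ g)(z,w) := ∑_{n=0}^{∞} ((−1)^n / n!) · (1/(−1/ℏ)_{n↓}) · D^{n,0} g₊(z,w) · D^{0,n} f₊(z,w) (a tsum over n ∈ ℕ) is holomorphic on the deformation domain, i.e. it is differentiable over ℂ at every point of 𝒟 within 𝒟 (DifferentiableOn ℂ on the set 𝒟). -/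
/-- A holomorphic pair on `Ω`: two functions holomorphic on `O` which agree under the
flip `(z,w) ↦ (1/w,1/z)`. -/
def IsHolPair (fp fm : ℂ × ℂ → ℂ) : Prop :=
  DifferentiableOn ℂ fp Oset ∧ DifferentiableOn ℂ fm Oset ∧
    ∀ z w : ℂ, z ≠ 0 → w ≠ 0 → z * w ≠ 1 → fp (z, w) = fm (1 / w, 1 / z)

/-- The falling factorial `(x)_{n↓} = x(x−1)⋯(x−n+1)`. -/
noncomputable def ffall (x : ℂ) (n : ℕ) : ℂ := ∏ j ∈ Finset.range n, (x - j)

/-- The deformation domain `𝒟 = ℂ* ∖ {−1/n : n ∈ ℕ}`. -/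
def Dset : Set ℂ := {h | h ≠ 0 ∧ ∀ n : ℕ, 0 < n → h ≠ -1 / (n : ℂ)}

open Filter Metric in
lemma isOpen_Oset : IsOpen Oset := by
  have : Oset = (fun p : ℂ × ℂ => p.1 * p.2) ⁻¹' {(1 : ℂ)}ᶜ := rfl
  rw [this]
  exact isOpen_compl_singleton.preimage (by fun_prop)

open Filter in
/-- The slice `u ↦ p((a+u)/(1+bu), b)` of a holomorphic pair extends to an entire function. -/
lemma extend_entire (p q : ℂ × ℂ → ℂ) (hp : DifferentiableOn ℂ p Oset)
    (hq : DifferentiableOn ℂ q Oset)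
    (hrel : ∀ z w : ℂ, z ≠ 0 → w ≠ 0 → z * w ≠ 1 → p (z, w) = q (1 / w, 1 / z))
    (a b : ℂ) (hab : a * b ≠ 1) :
    ∃ G : ℂ → ℂ, Differentiable ℂ G ∧
      ∀ u : ℂ, 1 + b * u ≠ 0 → G u = p ((a + u) / (1 + b * u), b) := by
  by_cases hb : b = 0
  · subst hb
    refine ⟨fun u => p (a + u, 0), fun u => ?_, fun u _ => by simp⟩
    have hmem : ((a + u, 0) : ℂ × ℂ) ∈ Oset := by simp [Oset]
    have hpd : DifferentiableAt ℂ p (a + u, 0) :=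
      hp.differentiableAt (isOpen_Oset.mem_nhds hmem)
    exact hpd.comp u (((differentiableAt_const a).add differentiableAt_id).prodMk
      (differentiableAt_const 0))
  · classical
    set G : ℂ → ℂ := fun u => if 1 + b * u = 0 then q (1 / b, (1 + b * u) / (a + u))
      else p ((a + u) / (1 + b * u), b) with hGdef
    have key1 : ∀ u, 1 + b * u ≠ 0 → G u = p ((a + u) / (1 + b * u), b) := by
      intro u hu; simp only [hGdef, if_neg hu]
    have memO : ∀ u : ℂ, 1 + b * u ≠ 0 → ((a + u) / (1 + b * u)) * b ≠ 1 := by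
      intro u hu h1
      rw [div_mul_eq_mul_div, div_eq_iff hu] at h1
      exact hab (by linear_combination h1)
    have memO2 : ∀ u : ℂ, a + u ≠ 0 → (1 / b) * ((1 + b * u) / (a + u)) ≠ 1 := by
      intro u hu h1
      rw [div_mul_div_comm, one_mul, div_eq_iff (mul_ne_zero hb hu)] at h1
      exact hab (by linear_combination -h1)
    have hGh : ∀ u : ℂ, a + u ≠ 0 → G u = q (1 / b, (1 + b * u) / (a + u)) := by
      intro u hu
      by_cases h0 : 1 + b * u = 0
      · simp only [hGdef, if_pos h0]
      · rw [key1 u h0, hrel _ _ (div_ne_zero hu h0) hb (memO u h0), one_div_div]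
    refine ⟨G, fun u₀ => ?_, key1⟩
    by_cases h0 : 1 + b * u₀ ≠ 0
    · have hev : G =ᶠ[nhds u₀] fun u => p ((a + u) / (1 + b * u), b) := by
        have hc : ContinuousAt (fun u : ℂ => 1 + b * u) u₀ := by fun_prop
        filter_upwards [hc.eventually_ne h0] with u hu using key1 u hu
      have hmem : (((a + u₀) / (1 + b * u₀), b) : ℂ × ℂ) ∈ Oset := memO u₀ h0
      have hpd : DifferentiableAt ℂ p ((a + u₀) / (1 + b * u₀), b) :=
        hp.differentiableAt (isOpen_Oset.mem_nhds hmem)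
      have hφ : DifferentiableAt ℂ (fun u : ℂ => ((a + u) / (1 + b * u), b)) u₀ := by
        refine DifferentiableAt.prodMk ?_ (differentiableAt_const b)
        exact ((differentiableAt_const a).add differentiableAt_id).div
          ((differentiableAt_const 1).add ((differentiableAt_const b).mul differentiableAt_id)) h0
      exact (hev.differentiableAt_iff).mpr (hpd.comp u₀ hφ)
    · push_neg at h0
      have hau : a + u₀ ≠ 0 := by
        intro h
        apply hab
        have : u₀ = -a := by linear_combination h
        rw [this] at h0
        linear_combination -h0
      have hev : G =ᶠ[nhds u₀] fun u => q (1 / b, (1 + b * u) / (a + u)) := by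
        have hc : ContinuousAt (fun u : ℂ => a + u) u₀ := by fun_prop
        filter_upwards [hc.eventually_ne hau] with u hu using hGh u hu
      have hmem : ((1 / b, (1 + b * u₀) / (a + u₀)) : ℂ × ℂ) ∈ Oset := memO2 u₀ hau
      have hqd : DifferentiableAt ℂ q (1 / b, (1 + b * u₀) / (a + u₀)) :=
        hq.differentiableAt (isOpen_Oset.mem_nhds hmem)
      have hφ : DifferentiableAt ℂ (fun u : ℂ => ((1 / b : ℂ), (1 + b * u) / (a + u))) u₀ := by
        refine DifferentiableAt.prodMk (differentiableAt_const _) ?_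
        exact ((differentiableAt_const 1).add ((differentiableAt_const b).mul
          differentiableAt_id)).div ((differentiableAt_const a).add differentiableAt_id) hau
      exact (hev.differentiableAt_iff).mpr (hqd.comp u₀ hφ)

open Filter in
/-- Taylor coefficients of an entire function beat any geometric growth. -/
lemma entire_bound {G : ℂ → ℂ} (hG : Differentiable ℂ G) {r : ℝ} (hr : 0 ≤ r) :
    ∃ C : ℝ, ∀ n : ℕ, ‖iteratedDeriv n G 0‖ / (n.factorial : ℝ) * r ^ n ≤ C := by
  have hsum := (Complex.hasSum_taylorSeries_of_entire hG 0 (r : ℂ)).summable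
  have h2 : Tendsto (fun n : ℕ =>
      ‖((n.factorial : ℂ))⁻¹ • ((r : ℂ) - 0) ^ n • iteratedDeriv n G 0‖) atTop (nhds 0) := by
    simpa using hsum.tendsto_atTop_zero.norm
  obtain ⟨C, hC⟩ := h2.bddAbove_range
  refine ⟨C, fun n => ?_⟩
  have hmem := hC (Set.mem_range_self n)
  have : ‖((n.factorial : ℂ))⁻¹ • ((r : ℂ) - 0) ^ n • iteratedDeriv n G 0‖
      = ‖iteratedDeriv n G 0‖ / (n.factorial : ℝ) * r ^ n := by
    rw [norm_smul, norm_smul, norm_inv, norm_pow, sub_zero]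
    rw [Complex.norm_natCast, Complex.norm_real, Real.norm_of_nonneg hr]
    ring
  rw [this] at hmem
  exact hmem

/-- Uniform lower bound for `‖ffall x n‖` near a point `x₀` avoiding `ℕ`. -/
lemma ffall_bound {x₀ : ℂ} (hx : ∀ j : ℕ, x₀ ≠ (j : ℂ)) :
    ∃ δ : ℝ, 0 < δ ∧ ∃ K : ℝ, 1 ≤ K ∧ ∀ x : ℂ, dist x x₀ < δ → ∀ n : ℕ,
      (n.factorial : ℝ) ≤ K ^ n * ‖ffall x n‖ := by
  set X : ℝ := ‖x₀‖ + 1 with hX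
  set N : ℕ := ⌈2 * X⌉₊ with hN
  have hne : (Finset.range (N + 1)).Nonempty := ⟨0, by simp⟩
  set δ₀ : ℝ := (Finset.range (N + 1)).inf' hne (fun j => ‖x₀ - (j : ℂ)‖) with hδ₀
  have hδ₀pos : 0 < δ₀ := by
    rw [hδ₀, Finset.lt_inf'_iff]
    intro j _
    exact norm_pos_iff.mpr (sub_ne_zero.mpr (hx j))
  set δ : ℝ := min 1 (δ₀ / 2) with hδ
  have hδpos : 0 < δ := lt_min one_pos (by linarith)
  set K : ℝ := max 4 (2 * (N + 1) / δ₀) with hK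
  have hK4 : (4 : ℝ) ≤ K := le_max_left _ _
  have hK1 : (1 : ℝ) ≤ K := by linarith
  refine ⟨δ, hδpos, K, hK1, fun x hxd n => ?_⟩
  have hxX : ‖x‖ ≤ X := by
    have : ‖x - x₀‖ < δ := by rwa [← dist_eq_norm]
    have h1 : δ ≤ 1 := min_le_left _ _
    calc ‖x‖ = ‖x₀ + (x - x₀)‖ := by ring_nf
    _ ≤ ‖x₀‖ + ‖x - x₀‖ := norm_add_le _ _
    _ ≤ ‖x₀‖ + 1 := by linarith
  have key : ∀ j : ℕ, ((j : ℝ) + 1) ≤ K * ‖x - (j : ℂ)‖ := by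
    intro j
    by_cases hj : j ≤ N
    · have h1 : δ₀ ≤ ‖x₀ - (j : ℂ)‖ := by
        rw [hδ₀]
        exact Finset.inf'_le _ (Finset.mem_range.mpr (Nat.lt_succ_of_le hj))
      have h2 : ‖x - (j : ℂ)‖ ≥ δ₀ / 2 := by
        have hd : ‖x - x₀‖ < δ₀ / 2 := by
          have : ‖x - x₀‖ < δ := by rwa [← dist_eq_norm]
          have := min_le_right 1 (δ₀ / 2)
          linarith
        have ht : ‖(x - (j : ℂ)) - (x - x₀)‖ ≤ ‖x - (j : ℂ)‖ + ‖x - x₀‖ := norm_sub_le _ _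
        have heq : (x - (j : ℂ)) - (x - x₀) = x₀ - (j : ℂ) := by ring
        rw [heq] at ht
        linarith
      have hKd : 2 * ((N : ℝ) + 1) / δ₀ ≤ K := le_max_right _ _
      have hjN : (j : ℝ) + 1 ≤ (N : ℝ) + 1 := by
        have : (j : ℝ) ≤ N := Nat.cast_le.mpr hj
        linarith
      calc ((j : ℝ) + 1) ≤ (N : ℝ) + 1 := hjN
      _ = (2 * ((N : ℝ) + 1) / δ₀) * (δ₀ / 2) := by field_simp
      _ ≤ K * (δ₀ / 2) := by
          apply mul_le_mul_of_nonneg_right hKd; linarith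
      _ ≤ K * ‖x - (j : ℂ)‖ := by
          apply mul_le_mul_of_nonneg_left h2; linarith
    · push_neg at hj
      have h2X : 2 * X ≤ (N : ℝ) := Nat.le_ceil _
      have hjX : 2 * X ≤ (j : ℝ) := by
        have : (N : ℝ) ≤ (j : ℝ) := Nat.cast_le.mpr hj.le
        linarith
      have hX1 : (1 : ℝ) ≤ X := by
        rw [hX]; have := norm_nonneg x₀; linarith
      have hj2 : (2 : ℝ) ≤ (j : ℝ) := by linarith
      have hnorm : (j : ℝ) - X ≤ ‖x - (j : ℂ)‖ := by
        have h1 : ‖x - (x - (j : ℂ))‖ ≤ ‖x‖ + ‖x - (j : ℂ)‖ := norm_sub_le _ _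
        have heq : x - (x - (j : ℂ)) = (j : ℂ) := by ring
        rw [heq, Complex.norm_natCast] at h1
        linarith
      have hhalf : (j : ℝ) / 2 ≤ (j : ℝ) - X := by linarith
      calc ((j : ℝ) + 1) ≤ 4 * ((j : ℝ) / 2) := by linarith
      _ ≤ K * ((j : ℝ) / 2) := by
          apply mul_le_mul_of_nonneg_right hK4; linarith
      _ ≤ K * ‖x - (j : ℂ)‖ := by
          apply mul_le_mul_of_nonneg_left (by linarith) (by linarith)
  have hfact : (n.factorial : ℝ) = ∏ j ∈ Finset.range n, ((j : ℝ) + 1) := by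
    rw [← Finset.prod_range_add_one_eq_factorial n]
    push_cast
    ring
  have hnorm : ‖ffall x n‖ = ∏ j ∈ Finset.range n, ‖x - (j : ℂ)‖ := by
    rw [ffall, norm_prod]
  calc (n.factorial : ℝ) = ∏ j ∈ Finset.range n, ((j : ℝ) + 1) := hfact
  _ ≤ ∏ j ∈ Finset.range n, (K * ‖x - (j : ℂ)‖) := by
      apply Finset.prod_le_prod
      · intro j _; positivity
      · intro j _; exact key j
  _ = K ^ n * ‖ffall x n‖ := by
      rw [Finset.prod_mul_distrib, Finset.prod_const, Finset.card_range, hnorm]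

lemma PM_n0 (g : ℂ × ℂ → ℂ) (z w : ℂ) (n : ℕ) :
    PM n 0 g z w = iteratedDeriv n (fun u => g ((z + u) / (1 + w * u), w)) 0 := by
  simp [PM]

lemma PM_0n (f : ℂ × ℂ → ℂ) (z w : ℂ) (n : ℕ) :
    PM 0 n f z w = iteratedDeriv n (fun v => f (z, (w + v) / (1 + z * v))) 0 := by
  simp [PM]

open Filter Metric in
/-- holomorphic dependence of the Wick star product on the deformation
parameter `ℏ ∈ 𝒟`. -/
theorem stmt17 (fp fm gp gm : ℂ × ℂ → ℂ)
    (hf : IsHolPair fp fm) (hg : IsHolPair gp gm)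
    (z w : ℂ) (hzw : z * w ≠ 1) :
    DifferentiableOn ℂ
      (fun ℏ : ℂ => ∑' n : ℕ,
        ((-1 : ℂ) ^ n / (n.factorial : ℂ)) * (1 / ffall (-1 / ℏ) n)
          * PM n 0 gp z w * PM 0 n fp z w)
      Dset := by
  obtain ⟨hfp, hfm, hfrel⟩ := hf
  obtain ⟨hgp, hgm, hgrel⟩ := hg
  -- entire extensions of the two coefficient-generating slices
  obtain ⟨G, hG, hGeq⟩ := extend_entire gp gm hgp hgm hgrel z w hzw
  have hswap : ∀ (h : ℂ × ℂ → ℂ), DifferentiableOn ℂ h Oset →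
      DifferentiableOn ℂ (fun q : ℂ × ℂ => h (q.2, q.1)) Oset := by
    intro h hh
    refine hh.comp ((differentiable_snd.prodMk differentiable_fst).differentiableOn) ?_
    intro q hq
    simp only [Oset, Set.mem_setOf_eq] at hq ⊢
    rwa [mul_comm]
  obtain ⟨H, hH, hHeq⟩ := extend_entire (fun q => fp (q.2, q.1)) (fun q => fm (q.2, q.1))
    (hswap fp hfp) (hswap fm hfm)
    (fun x y hx hy hxy => hfrel y x hy hx (by rwa [mul_comm])) w z
    (by rwa [mul_comm])
  -- identify the PM derivatives with derivatives of the entire functions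
  have hGA : ∀ n, PM n 0 gp z w = iteratedDeriv n G 0 := by
    intro n
    rw [PM_n0]
    refine (Filter.EventuallyEq.iteratedDeriv_eq n ?_)
    have hc : ContinuousAt (fun u : ℂ => 1 + w * u) 0 := by fun_prop
    have h0 : (1 : ℂ) + w * 0 ≠ 0 := by simp
    filter_upwards [hc.eventually_ne h0] with u hu using (hGeq u hu).symm
  have hHA : ∀ n, PM 0 n fp z w = iteratedDeriv n H 0 := by
    intro n
    rw [PM_0n]
    refine (Filter.EventuallyEq.iteratedDeriv_eq n ?_)
    have hc : ContinuousAt (fun v : ℂ => 1 + z * v) 0 := by fun_prop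
    have h0 : (1 : ℂ) + z * 0 ≠ 0 := by simp
    filter_upwards [hc.eventually_ne h0] with v hv using (hHeq v hv).symm
  -- main local argument
  intro ℏ₀ h₀
  have hℏ0 : ℏ₀ ≠ 0 := h₀.1
  have hxnat : ∀ j : ℕ, (-1 / ℏ₀ : ℂ) ≠ (j : ℂ) := by
    intro j hj
    cases j with
    | zero =>
      simp only [Nat.cast_zero] at hj
      exact (div_ne_zero (neg_ne_zero.mpr one_ne_zero) hℏ0) hj
    | succ k =>
      apply h₀.2 (k + 1) (Nat.succ_pos k)
      have hc : ((k + 1 : ℕ) : ℂ) ≠ 0 := Nat.cast_ne_zero.mpr (Nat.succ_ne_zero k)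
      rw [div_eq_iff hℏ0] at hj
      rw [eq_div_iff hc]
      push_cast at hj ⊢
      linear_combination -hj
  obtain ⟨δ, hδpos, K, hK1, hffb⟩ := ffall_bound hxnat
  -- a ball around ℏ₀ inside the good region
  have hcont : ContinuousAt (fun ℏ : ℂ => -1 / ℏ) ℏ₀ :=
    (continuousAt_const.div continuousAt_id hℏ0)
  have hS : {ℏ : ℂ | ℏ ≠ 0 ∧ dist (-1 / ℏ) (-1 / ℏ₀) < δ} ∈ nhds ℏ₀ := by
    have h1 : {ℏ : ℂ | ℏ ≠ 0} ∈ nhds ℏ₀ := isOpen_compl_singleton.mem_nhds hℏ0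
    have h2 : (fun ℏ : ℂ => -1 / ℏ) ⁻¹' (ball (-1 / ℏ₀) δ) ∈ nhds ℏ₀ :=
      hcont.preimage_mem_nhds (ball_mem_nhds _ hδpos)
    filter_upwards [h1, h2] with ℏ hn hb
    exact ⟨hn, hb⟩
  obtain ⟨ε, hεpos, hsub⟩ := Metric.mem_nhds_iff.mp hS
  have hgood : ∀ ℏ ∈ ball ℏ₀ ε, ℏ ≠ 0 ∧
      ∀ n : ℕ, (n.factorial : ℝ) ≤ K ^ n * ‖ffall (-1 / ℏ) n‖ := by
    intro ℏ hℏ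
    obtain ⟨h1, h2⟩ := hsub hℏ
    exact ⟨h1, fun n => hffb _ h2 n⟩
  have hffne : ∀ ℏ ∈ ball ℏ₀ ε, ∀ n : ℕ, ffall (-1 / ℏ) n ≠ 0 := by
    intro ℏ hℏ n h
    have := (hgood ℏ hℏ).2 n
    rw [h, norm_zero, mul_zero] at this
    exact absurd this (not_le.mpr (by positivity))
  have hFdiff : ∀ n : ℕ, DifferentiableOn ℂ (fun ℏ : ℂ =>
      ((-1 : ℂ) ^ n / (n.factorial : ℂ)) * (1 / ffall (-1 / ℏ) n)
        * PM n 0 gp z w * PM 0 n fp z w) (ball ℏ₀ ε) := by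
    intro n ℏ hℏ
    have hℏ0' : ℏ ≠ 0 := (hgood ℏ hℏ).1
    have hffd : DifferentiableAt ℂ (fun ℏ : ℂ => ffall (-1 / ℏ) n) ℏ := by
      have hrw : (fun ℏ : ℂ => ffall (-1 / ℏ) n)
          = fun ℏ : ℂ => ∏ j ∈ Finset.range n, ((-1 / ℏ) - (j : ℂ)) := rfl
      rw [hrw]
      apply DifferentiableAt.fun_finsetProd
      intro j _
      exact ((differentiableAt_const (-1 : ℂ)).div differentiableAt_id hℏ0').sub
        (differentiableAt_const _)
    refine DifferentiableAt.differentiableWithinAt ?_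
    exact (((differentiableAt_const _).mul
      ((differentiableAt_const (1 : ℂ)).div hffd (hffne ℏ hℏ n))).mul
      (differentiableAt_const _)).mul (differentiableAt_const _)
  -- the uniform bound
  have hFle : ∀ (n : ℕ), ∀ ℏ ∈ ball ℏ₀ ε,
      ‖((-1 : ℂ) ^ n / (n.factorial : ℂ)) * (1 / ffall (-1 / ℏ) n)
        * PM n 0 gp z w * PM 0 n fp z w‖
      ≤ (‖iteratedDeriv n G 0‖ / (n.factorial : ℝ) * K ^ n)
          * (‖iteratedDeriv n H 0‖ / (n.factorial : ℝ)) := by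
    intro n ℏ hℏ
    have hfb := (hgood ℏ hℏ).2 n
    have hffpos : 0 < ‖ffall (-1 / ℏ) n‖ := norm_pos_iff.mpr (hffne ℏ hℏ n)
    have hfactpos : (0 : ℝ) < (n.factorial : ℝ) := by positivity
    have hinv : ‖ffall (-1 / ℏ) n‖⁻¹ ≤ K ^ n / (n.factorial : ℝ) := by
      rw [inv_le_iff_one_le_mul₀ hffpos, div_mul_eq_mul_div, le_div_iff₀ hfactpos, one_mul]
      linarith [hfb]
    have hnorm : ‖((-1 : ℂ) ^ n / (n.factorial : ℂ)) * (1 / ffall (-1 / ℏ) n)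
        * PM n 0 gp z w * PM 0 n fp z w‖
        = 1 / (n.factorial : ℝ) * ‖ffall (-1 / ℏ) n‖⁻¹
            * (‖iteratedDeriv n G 0‖ * ‖iteratedDeriv n H 0‖) := by
      rw [← hGA n, ← hHA n]
      simp only [norm_mul, norm_div, norm_pow, norm_neg, norm_one, one_pow,
        Complex.norm_natCast, norm_inv, one_div]
      ring
    rw [hnorm]
    have hAB : 0 ≤ ‖iteratedDeriv n G 0‖ * ‖iteratedDeriv n H 0‖ :=
      mul_nonneg (norm_nonneg _) (norm_nonneg _)
    calc 1 / (n.factorial : ℝ) * ‖ffall (-1 / ℏ) n‖⁻¹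
          * (‖iteratedDeriv n G 0‖ * ‖iteratedDeriv n H 0‖)
        ≤ 1 / (n.factorial : ℝ) * (K ^ n / (n.factorial : ℝ))
          * (‖iteratedDeriv n G 0‖ * ‖iteratedDeriv n H 0‖) := by
          apply mul_le_mul_of_nonneg_right _ hAB
          exact mul_le_mul_of_nonneg_left hinv (by positivity)
      _ = (‖iteratedDeriv n G 0‖ / (n.factorial : ℝ) * K ^ n)
          * (‖iteratedDeriv n H 0‖ / (n.factorial : ℝ)) := by ring
  -- summability of the bound
  have hKpos : (0 : ℝ) < K := by linarith
  obtain ⟨Ca, hCa⟩ := entire_bound hG (r := 2 * K) (by linarith)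
  obtain ⟨Cb, hCb⟩ := entire_bound hH (r := 1) (by norm_num)
  have hCb0 : ∀ n : ℕ, ‖iteratedDeriv n H 0‖ / (n.factorial : ℝ) ≤ Cb := by
    intro n
    have := hCb n
    rwa [one_pow, mul_one] at this
  have hCa0 : ∀ n : ℕ, ‖iteratedDeriv n G 0‖ / (n.factorial : ℝ) * K ^ n ≤ Ca / 2 ^ n := by
    intro n
    have h1 := hCa n
    have h2 : ‖iteratedDeriv n G 0‖ / (n.factorial : ℝ) * (2 * K) ^ n
        = (‖iteratedDeriv n G 0‖ / (n.factorial : ℝ) * K ^ n) * 2 ^ n := by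
      rw [mul_pow]; ring
    rw [h2] at h1
    rw [le_div_iff₀ (by positivity : (0:ℝ) < 2 ^ n)]
    exact h1
  have hCbnn : 0 ≤ Cb := le_trans (by positivity) (hCb0 0)
  have husum : Summable (fun n : ℕ =>
      (‖iteratedDeriv n G 0‖ / (n.factorial : ℝ) * K ^ n)
        * (‖iteratedDeriv n H 0‖ / (n.factorial : ℝ))) := by
    refine Summable.of_nonneg_of_le (f := fun n : ℕ => Ca / 2 ^ n * Cb)
      (fun n => by positivity) (fun n => ?_) ?_
    · apply mul_le_mul (hCa0 n) (hCb0 n) (by positivity) ?_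
      have := hCa0 n
      have h0 : (0:ℝ) ≤ ‖iteratedDeriv n G 0‖ / (n.factorial : ℝ) * K ^ n := by positivity
      linarith
    · have hg2 : (fun n : ℕ => Ca / 2 ^ n * Cb) = fun n : ℕ => (Ca * Cb) * (1 / 2) ^ n := by
        funext n; rw [div_pow, one_pow]; ring
      rw [hg2]
      exact (summable_geometric_of_lt_one (by norm_num) (by norm_num)).mul_left _
  -- conclude
  have hmain := Complex.differentiableOn_tsum_of_summable_norm husum hFdiff isOpen_ball hFle
  exact (hmain.differentiableAt
    (isOpen_ball.mem_nhds (mem_ball_self hεpos))).differentiableWithinAt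
end
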